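/- (Theorem 8) Let K ∈ M₊(ℝ₊²) with iterated rearrangement L = (K^{*₂})^{*₁}. Let Φ₁, Φ₂ be N-functions with Φ₁(2t) ≈ Φ₁(t) for t ≫ 1, and let u₁, u₂ be weights with ∫₀^∞ u₁ = ∞. Assume there exists C₀ > 0 with ρ_{Φ₁,u₁}( t ↦ t⁻¹∫₀ᵗ g ) ≤ C₀ ρ_{Φ₁,u₁}( g ) for every nonincreasing g ∈ M₊(ℝ₊). If there exists C > 0 with ρ_{Φ₁,u₁}( T_L f* ) ≤ C ρ_{Φ₂,u₂}( f* ) for all f ∈ M₊(ℝ₊), then there exists C′ > 0 with ρ_{Φ₁,u₁}( (T_K f)* ) ≤ C′ ρ_{Φ₂,u₂}( f* ) for all f ∈ M₊(ℝ₊). -/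

import Mathlib

open MeasureTheory Set Function
open scoped ENNReal

noncomputable section

/-- The nonincreasing rearrangement of `f` with respect to the measure `μ`:
`f*(t) = inf {λ > 0 : μ{x : f x > λ} ≤ t}`. -/
def rearr {α : Type*} [MeasurableSpace α] (μ : Measure α) (f : α → ℝ≥0∞) (t : ℝ) : ℝ≥0∞ :=
  sInf {l : ℝ≥0∞ | 0 < l ∧ μ {x | l < f x} ≤ ENNReal.ofReal t}

/-- Lebesgue measure restricted to `(0,∞)`. -/
def mP : Measure ℝ := volume.restrict (Ioi 0)

/-- The nonincreasing rearrangement of a function on `(0,∞)`. -/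
def rearrP (f : ℝ → ℝ≥0∞) : ℝ → ℝ≥0∞ := rearr mP f

/-- Application of a real function (e.g. an N-function) to an extended nonnegative
real number, sending `∞` to `∞`. -/
def appE (Φ : ℝ → ℝ) (x : ℝ≥0∞) : ℝ≥0∞ :=
  if x = ∞ then ∞ else ENNReal.ofReal (Φ x.toReal)

/-- Generalized inverse of an increasing function on `[0,∞)`. -/
def nInv (Φ : ℝ → ℝ) (v : ℝ) : ℝ :=
  sInf {x : ℝ | 0 ≤ x ∧ v ≤ Φ x}

/-- The generalized inverse, extended to `ℝ≥0∞`. -/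
def nInvE (Φ : ℝ → ℝ) (v : ℝ≥0∞) : ℝ≥0∞ :=
  if v = ∞ then ∞ else ENNReal.ofReal (nInv Φ v.toReal)

/-- `Φ` is the N-function `Φ(x) = ∫₀ˣ φ`, where `φ : (0,∞) → (0,∞)` is
nondecreasing and onto `(0,∞)`. -/
def IsNFunctionWith (φ Φ : ℝ → ℝ) : Prop :=
  MonotoneOn φ (Ioi 0) ∧ (∀ y > 0, 0 < φ y) ∧ (∀ s > 0, ∃ y > 0, φ y = s) ∧
    ∀ x : ℝ, Φ x = ∫ y in Ioc 0 x, φ y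

/-- `Φ` is an N-function. -/
def IsNFunction (Φ : ℝ → ℝ) : Prop := ∃ φ, IsNFunctionWith φ Φ

/-- `Φ` and `Ψ` are complementary N-functions: `Φ(x) = ∫₀ˣ φ` and `Ψ(t) = ∫₀ᵗ φ⁻¹`,
where `φ⁻¹(s) = inf {y > 0 : φ y ≥ s}`. -/
def IsNPair (Φ Ψ : ℝ → ℝ) : Prop :=
  ∃ φ, IsNFunctionWith φ Φ ∧
    ∀ t : ℝ, Ψ t = ∫ s in Ioc 0 t, sInf {y : ℝ | 0 < y ∧ s ≤ φ y}

/-- `Φ(2t) ≈ Φ(t)` for `t ≫ 1`. -/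
def Delta2AtInfty (Φ : ℝ → ℝ) : Prop :=
  ∃ c > (0:ℝ), ∃ T > (0:ℝ), ∀ t ≥ T, Φ (2 * t) ≤ c * Φ t

/-- A weight: a nonnegative locally integrable function on `(0,∞)`. -/
def IsWeight (u : ℝ → ℝ) : Prop :=
  (∀ x ∈ Ioi (0:ℝ), 0 ≤ u x) ∧ LocallyIntegrableOn u (Ioi 0)

/-- The weighted Orlicz gauge norm `ρ_{Φ,u}` on `(0,∞)`. -/
def gaugeW (Φ : ℝ → ℝ) (u : ℝ → ℝ) (f : ℝ → ℝ≥0∞) : ℝ≥0∞ :=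
  sInf {l : ℝ≥0∞ | 0 < l ∧
    ∫⁻ x in Ioi (0:ℝ), appE Φ (f x / l) * ENNReal.ofReal (u x) ≤ 1}

/-- The unweighted Orlicz gauge norm `ρ_Φ` on `(0,∞)`. -/
def gaugeP (Φ : ℝ → ℝ) (f : ℝ → ℝ≥0∞) : ℝ≥0∞ :=
  sInf {l : ℝ≥0∞ | 0 < l ∧ ∫⁻ x in Ioi (0:ℝ), appE Φ (f x / l) ≤ 1}

/-- The unweighted Orlicz gauge norm `ρ_Φ` on `ℝⁿ`. -/
def gaugeE {n : ℕ} (Φ : ℝ → ℝ) (f : EuclideanSpace ℝ (Fin n) → ℝ≥0∞) : ℝ≥0∞ :=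
  sInf {l : ℝ≥0∞ | 0 < l ∧ ∫⁻ x, appE Φ (f x / l) ≤ 1}

/-- Convolution of nonnegative functions on `ℝⁿ`. -/
def conv {n : ℕ} (f g : EuclideanSpace ℝ (Fin n) → ℝ≥0∞)
    (x : EuclideanSpace ℝ (Fin n)) : ℝ≥0∞ :=
  ∫⁻ y, f (x - y) * g y

/-- The integral operator with kernel `K` on `(0,∞)`. -/
def TK (K : ℝ → ℝ → ℝ≥0∞) (f : ℝ → ℝ≥0∞) (x : ℝ) : ℝ≥0∞ :=
  ∫⁻ y in Ioi (0:ℝ), K x y * f y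

/-- The iterated rearrangement `L = (K^{*₂})^{*₁}` of a kernel on `(0,∞)²`:
first rearrange `y ↦ K x y` for fixed `x`, then rearrange the result in `x`. -/
def iterRearr (K : ℝ → ℝ → ℝ≥0∞) (t s : ℝ) : ℝ≥0∞ :=
  rearrP (fun x => rearrP (K x) s) t

/-!
For a measurable `E ⊆ (0,∞)` with `|E| ≤ t`, two applications of the Hardy–Littlewood
rearrangement inequality, first in `y` for each fixed `x` and then in `x`, give
`∫_E T_K f ≤ ∫₀ᵗ T_L f*`. Choosing `E` inside the superlevel set `{T_K f > l}` with `|E| = t`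
turns this into the pointwise bound `(T_K f)*(t) ≤ t⁻¹ ∫₀ᵗ T_L f*`, that is, `(T_K f)*` is
dominated by the Hardy average of the nonincreasing function `T_L f*`. The boundedness of the
Hardy operator on nonincreasing functions and the assumed bound for `T_L` finish the proof.
-/

instance : SigmaFinite mP := by unfold mP; infer_instance

section Rearrangement

variable {α : Type*} [MeasurableSpace α] {μ : Measure α} {f : α → ℝ≥0∞}

lemma rearr_antitone (μ : Measure α) (f : α → ℝ≥0∞) : Antitone (rearr μ f) :=
  fun _ _ h => sInf_le_sInf fun _ hl => ⟨hl.1, hl.2.trans (ENNReal.ofReal_le_ofReal h)⟩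

lemma measurable_rearr (μ : Measure α) (f : α → ℝ≥0∞) : Measurable (rearr μ f) :=
  (rearr_antitone μ f).measurable

lemma rearr_le {l : ℝ≥0∞} {t : ℝ} (hl : 0 < l) (h : μ {x | l < f x} ≤ ENNReal.ofReal t) :
    rearr μ f t ≤ l :=
  sInf_le ⟨hl, h⟩

lemma le_rearr_of_lt_measure {m : ℝ≥0∞} {t : ℝ} (h : ENNReal.ofReal t < μ {x | m < f x}) :
    m ≤ rearr μ f t :=
  le_sInf fun _ hl => le_of_not_gt fun hlm =>
    (hl.2.trans_lt h).not_ge (measure_mono fun _ hx => hlm.trans hx)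

lemma mP_setOf_ofReal_lt (c : ℝ≥0∞) : mP {τ | ENNReal.ofReal τ < c} = c := by
  rw [mP, Measure.restrict_apply' measurableSet_Ioi]
  rcases eq_or_ne c ⊤ with rfl | hc
  · simp
  · have : {τ : ℝ | ENNReal.ofReal τ < c} ∩ Ioi 0 = Ioo 0 c.toReal := by
      ext τ
      simp only [mem_inter_iff, mem_ofPred_eq, mem_Ioi, mem_Ioo]
      exact ⟨fun h => ⟨h.2, (ENNReal.ofReal_lt_iff_lt_toReal h.2.le hc).1 h.1⟩,
        fun h => ⟨(ENNReal.ofReal_lt_iff_lt_toReal h.1.le hc).2 h.2, h.1⟩⟩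
    rw [this, Real.volume_Ioo, sub_zero, ENNReal.ofReal_toReal hc]

/-- By right-continuity of the distribution function, every level `ofReal τ` below
`μ {l < f}` is already below `μ {l' < f}` for some `l' > l`. -/
lemma measure_lt_le_mP_lt_rearr (f : α → ℝ≥0∞) (l : ℝ≥0∞) :
    μ {x | l < f x} ≤ mP {τ | l < rearr μ f τ} := by
  rcases eq_or_ne l ⊤ with rfl | hl
  · simp
  obtain ⟨u, hu_anti, hu_mem, hu_lim⟩ := exists_seq_strictAnti_tendsto' hl.lt_top
  have hunion : {x | l < f x} = ⋃ n, {x | u n < f x} := by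
    ext x
    simp only [mem_ofPred_eq, mem_iUnion]
    exact ⟨fun hx => (hu_lim.eventually (gt_mem_nhds hx)).exists,
      fun ⟨n, hn⟩ => (hu_mem n).1.trans hn⟩
  have hmono : Monotone fun n => {x | u n < f x} :=
    fun m n hmn x hx => (hu_anti.antitone hmn).trans_lt hx
  calc μ {x | l < f x} = mP {τ | ENNReal.ofReal τ < μ {x | l < f x}} :=
        (mP_setOf_ofReal_lt _).symm
    _ ≤ mP {τ | l < rearr μ f τ} := by
      refine measure_mono fun τ hτ => ?_
      rw [mem_ofPred_eq, hunion, hmono.measure_iUnion, lt_iSup_iff] at hτ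
      obtain ⟨n, hn⟩ := hτ
      exact (hu_mem n).1.trans_le (le_rearr_of_lt_measure hn)

lemma mP_inter_superlevel_rearr (u v : α → ℝ≥0∞) (a b : ℝ≥0∞) :
    mP ({τ | a < rearr μ u τ} ∩ {τ | b < rearr μ v τ})
      = min (mP {τ | a < rearr μ u τ}) (mP {τ | b < rearr μ v τ}) := by
  have hlower : ∀ (w : α → ℝ≥0∞) (c : ℝ≥0∞), IsLowerSet {τ | c < rearr μ w τ} :=
    fun w c => isLowerSet_setOfPred.2 fun _ _ h hc => hc.trans_le (rearr_antitone μ w h)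
  rcases (hlower u a).total (hlower v b) with h | h
  · rw [inter_eq_left.2 h, min_eq_left (measure_mono h)]
  · rw [inter_eq_right.2 h, min_eq_right (measure_mono h)]

end Rearrangement

section LayerCake

variable {α : Type*} [MeasurableSpace α] {μ : Measure α} [SFinite μ] {u v : α → ℝ≥0∞}

lemma lintegral_indicator_setOf_ofReal_lt (c : ℝ≥0∞) :
    ∫⁻ l, {l : ℝ | ENNReal.ofReal l < c}.indicator 1 l ∂mP = c := by
  rw [lintegral_indicator_one (measurableSet_lt ENNReal.measurable_ofReal measurable_const),
    mP_setOf_ofReal_lt]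

lemma lintegral_mul_eq_lintegral_indicator_superlevel (hu : Measurable u) (hv : Measurable v) :
    ∫⁻ x, u x * v x ∂μ = ∫⁻ l, ∫⁻ x, {x | ENNReal.ofReal l < u x}.indicator v x ∂μ ∂mP := by
  have hpt : ∀ x, u x * v x = ∫⁻ l, {l : ℝ | ENNReal.ofReal l < u x}.indicator 1 l * v x ∂mP := by
    intro x
    rw [lintegral_mul_const _ (measurable_one.indicator
      (measurableSet_lt ENNReal.measurable_ofReal measurable_const)),
      lintegral_indicator_setOf_ofReal_lt]
  have hind : ∀ l x, {l : ℝ | ENNReal.ofReal l < u x}.indicator 1 l * v x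
      = {x | ENNReal.ofReal l < u x}.indicator v x := by
    intro l x
    by_cases h : ENNReal.ofReal l < u x <;> simp [indicator, h]
  simp_rw [hpt, hind]
  refine lintegral_lintegral_swap (Measurable.aemeasurable ?_)
  exact (hv.comp measurable_fst).indicator
    (measurableSet_lt (ENNReal.measurable_ofReal.comp measurable_snd) (hu.comp measurable_fst))

lemma lintegral_mul_eq_lintegral_measure_inter (hu : Measurable u) (hv : Measurable v) :
    ∫⁻ x, u x * v x ∂μ = ∫⁻ l, ∫⁻ s,
      μ ({x | ENNReal.ofReal l < u x} ∩ {x | ENNReal.ofReal s < v x}) ∂mP ∂mP := by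
  rw [lintegral_mul_eq_lintegral_indicator_superlevel hu hv]
  refine lintegral_congr fun l => ?_
  have hA : MeasurableSet {x | ENNReal.ofReal l < u x} := measurableSet_lt measurable_const hu
  have hw : Measurable ({x | ENNReal.ofReal l < u x}.indicator (1 : α → ℝ≥0∞)) :=
    measurable_one.indicator hA
  calc ∫⁻ x, {x | ENNReal.ofReal l < u x}.indicator v x ∂μ
      = ∫⁻ x, v x * {x | ENNReal.ofReal l < u x}.indicator 1 x ∂μ := by
        congr with x; by_cases h : ENNReal.ofReal l < u x <;> simp [indicator, h]
    _ = _ := lintegral_mul_eq_lintegral_indicator_superlevel hv hw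
    _ = _ := by
        refine lintegral_congr fun s => ?_
        rw [← lintegral_indicator_one (hA.inter (measurableSet_lt measurable_const hv)),
          inter_comm, indicator_indicator]

end LayerCake

section HardyLittlewood

variable {α : Type*} [MeasurableSpace α] {μ : Measure α} [SFinite μ]

theorem lintegral_mul_le_lintegral_rearr_mul_rearr {u v : α → ℝ≥0∞} (hu : Measurable u)
    (hv : Measurable v) :
    ∫⁻ x, u x * v x ∂μ ≤ ∫⁻ τ, rearr μ u τ * rearr μ v τ ∂mP := by
  rw [lintegral_mul_eq_lintegral_measure_inter hu hv,
    lintegral_mul_eq_lintegral_measure_inter (measurable_rearr μ u) (measurable_rearr μ v)]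
  gcongr with l s
  rw [mP_inter_superlevel_rearr]
  exact le_min ((measure_mono inter_subset_left).trans (measure_lt_le_mP_lt_rearr u _))
    ((measure_mono inter_subset_right).trans (measure_lt_le_mP_lt_rearr v _))

end HardyLittlewood

section Measurability

lemma measurable_sInf_of_isUpperSet {γ : Type*} [MeasurableSpace γ] {S : γ → Set ℝ≥0∞}
    (hS : ∀ p, IsUpperSet (S p)) (hq : ∀ q : ℚ, MeasurableSet {p | ENNReal.ofReal q ∈ S p}) :
    Measurable fun p => sInf (S p) := by
  refine measurable_of_Iio fun c => ?_
  have : (fun p => sInf (S p)) ⁻¹' Iio c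
      = ⋃ (q : ℚ) (_ : ENNReal.ofReal q < c), {p | ENNReal.ofReal q ∈ S p} := by
    ext p
    simp only [mem_preimage, mem_Iio, mem_iUnion, mem_ofPred_eq, exists_prop, sInf_lt_iff]
    constructor
    · rintro ⟨a, ha, hac⟩
      obtain ⟨q, -, haq, hqc⟩ := ENNReal.lt_iff_exists_rat_btwn.1 hac
      exact ⟨q, hqc, hS p haq.le ha⟩
    · rintro ⟨q, hqc, hq⟩
      exact ⟨_, hq, hqc⟩
  rw [this]
  exact .iUnion fun q => .iUnion fun _ => hq q

lemma measurable_rearr_uncurry {α β : Type*} [MeasurableSpace α] [MeasurableSpace β]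
    {ν : Measure β} [SFinite ν] {W : α → β → ℝ≥0∞} (hW : Measurable (uncurry W)) :
    Measurable fun p : α × ℝ => rearr ν (W p.1) p.2 := by
  refine measurable_sInf_of_isUpperSet
    (fun p l l' hll' hl =>
      ⟨hl.1.trans_le hll', (measure_mono fun y hy => hll'.trans_lt hy).trans hl.2⟩)
    fun q => ?_
  refine (MeasurableSet.const _).inter
    (measurableSet_le ?_ (ENNReal.measurable_ofReal.comp measurable_snd))
  exact (measurable_measure_prodMk_left (measurableSet_lt measurable_const hW)).comp measurable_fst

variable {K : ℝ → ℝ → ℝ≥0∞}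

lemma measurable_rearrP_uncurry (hK : Measurable (uncurry K)) :
    Measurable (uncurry fun x s => rearrP (K x) s) :=
  measurable_rearr_uncurry hK

lemma measurable_iterRearr (hK : Measurable (uncurry K)) : Measurable (uncurry (iterRearr K)) := by
  have hG : Measurable (uncurry fun s x => rearrP (K x) s) :=
    Measurable.comp (g := uncurry fun x s => rearrP (K x) s) (f := Prod.swap)
      (measurable_rearrP_uncurry hK) measurable_swap
  exact Measurable.comp (g := fun p : ℝ × ℝ => rearrP (fun x => rearrP (K x) p.1) p.2)
    (f := Prod.swap) (measurable_rearr_uncurry hG) measurable_swap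

lemma measurable_TK (hK : Measurable (uncurry K)) {f : ℝ → ℝ≥0∞} (hf : Measurable f) :
    Measurable (TK K f) :=
  (hK.mul (hf.comp measurable_snd)).lintegral_prod_right'

end Measurability

section Averages

variable {α : Type*} [MeasurableSpace α] {μ : Measure α}

lemma rearr_indicator_one_le {E : Set α} {t τ : ℝ} (hE : μ E ≤ ENNReal.ofReal t) (hτ : 0 < τ) :
    rearr μ (E.indicator 1) τ ≤ (Ioc 0 t).indicator 1 τ := by
  by_cases hτt : τ ≤ t
  · rw [indicator_of_mem (mem_Ioc.2 ⟨hτ, hτt⟩), Pi.one_apply]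
    have hle : ∀ x, E.indicator (1 : α → ℝ≥0∞) x ≤ 1 := fun x => by
      by_cases hx : x ∈ E <;> simp [hx]
    refine rearr_le one_pos ((measure_mono (t := ∅) fun x hx => (hle x).not_gt hx).trans ?_)
    simp
  · rw [indicator_of_notMem fun h => hτt h.2]
    refine le_of_forall_gt_imp_ge_of_dense fun l hl => rearr_le hl ?_
    calc μ {x | l < E.indicator 1 x} ≤ μ E :=
          measure_mono fun x hx => by_contra fun hxE => by simp [indicator_of_notMem hxE] at hx
      _ ≤ ENNReal.ofReal τ := hE.trans (ENNReal.ofReal_le_ofReal (not_le.1 hτt).le)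

lemma setLIntegral_le_setLIntegral_Ioc_rearr [SFinite μ] {g : α → ℝ≥0∞} (hg : Measurable g)
    {E : Set α} (hE : MeasurableSet E) {t : ℝ} (hEt : μ E ≤ ENNReal.ofReal t) :
    ∫⁻ x in E, g x ∂μ ≤ ∫⁻ τ in Ioc 0 t, rearr μ g τ := by
  calc ∫⁻ x in E, g x ∂μ = ∫⁻ x, g x * E.indicator 1 x ∂μ := by
        rw [← lintegral_indicator hE]
        congr with x
        by_cases hx : x ∈ E <;> simp [hx]
    _ ≤ ∫⁻ τ, rearr μ g τ * rearr μ (E.indicator 1) τ ∂mP :=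
        lintegral_mul_le_lintegral_rearr_mul_rearr hg (measurable_one.indicator hE)
    _ ≤ ∫⁻ τ, (Ioc 0 t).indicator (rearr μ g) τ ∂mP := by
        refine lintegral_mono_ae ((ae_restrict_mem measurableSet_Ioi).mono fun τ hτ => ?_)
        calc rearr μ g τ * rearr μ (E.indicator 1) τ
            ≤ rearr μ g τ * (Ioc 0 t).indicator 1 τ := by
              gcongr; exact rearr_indicator_one_le hEt hτ
          _ = (Ioc 0 t).indicator (rearr μ g) τ := by
            by_cases h : τ ∈ Ioc 0 t <;> simp [h]
    _ = ∫⁻ τ in Ioc 0 t, rearr μ g τ := by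
        rw [lintegral_indicator measurableSet_Ioc, mP,
          Measure.restrict_restrict_of_subset Ioc_subset_Ioi_self]

lemma exists_mP_inter_Ioc_eq {M : Set ℝ} {t : ℝ} (ht : 0 ≤ t) (h : ENNReal.ofReal t < mP M) :
    ∃ X, mP (M ∩ Ioc 0 X) = ENNReal.ofReal t := by
  set g : ℝ → ℝ≥0∞ := fun X => mP (M ∩ Ioc 0 X)
  have hg_fin : ∀ X, g X ≠ ⊤ := fun X =>
    ((measure_mono inter_subset_right).trans_lt
      ((Measure.restrict_apply_le _ _).trans_lt measure_Ioc_lt_top)).ne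
  have hg_lip : LipschitzWith 1 fun X => (g X).toReal := by
    refine LipschitzWith.of_le_add fun x y => ?_
    have hsub : M ∩ Ioc 0 x ⊆ (M ∩ Ioc 0 y) ∪ Ioc y x := fun z ⟨hzM, hz0, hzx⟩ =>
      (le_or_gt z y).imp (fun hzy => ⟨hzM, hz0, hzy⟩) fun hyz => ⟨hyz, hzx⟩
    have hIoc : mP (Ioc y x) ≤ ENNReal.ofReal (dist x y) :=
      (Measure.restrict_apply_le _ _).trans (Real.volume_Ioc.trans_le
        (ENNReal.ofReal_le_ofReal ((le_abs_self _).trans_eq (Real.dist_eq x y).symm)))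
    refine (ENNReal.toReal_le_add ((measure_mono hsub).trans (measure_union_le _ _) |>.trans
      (add_le_add_right hIoc _)) (hg_fin y) ENNReal.ofReal_ne_top).trans_eq ?_
    rw [ENNReal.toReal_ofReal dist_nonneg]
  obtain ⟨X, hX⟩ : ∃ X, ENNReal.ofReal t < g X := by
    have hunion : M ∩ Ioi 0 = ⋃ X : ℝ, M ∩ Ioc 0 X := by
      rw [← inter_iUnion, iUnion_Ioc_right]
    have hmono : Monotone fun X : ℝ => M ∩ Ioc 0 X :=
      fun _ _ hXY => inter_subset_inter_right _ (Ioc_subset_Ioc_right hXY)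
    rw [mP, Measure.restrict_apply' measurableSet_Ioi, hunion, hmono.measure_iUnion,
      lt_iSup_iff] at h
    obtain ⟨X, hX⟩ := h
    exact ⟨X, hX.trans_eq
      (Measure.restrict_eq_self _ (inter_subset_right.trans Ioc_subset_Ioi_self)).symm⟩
  have hg0 : (g 0).toReal = 0 := by simp [g]
  obtain ⟨Y, -, hY⟩ := intermediate_value_uIcc (a := 0) (b := X) hg_lip.continuous.continuousOn
    (by rw [hg0]; exact mem_uIcc_of_le ht ((ENNReal.ofReal_lt_iff_lt_toReal ht (hg_fin X)).1 hX).le)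
  exact ⟨Y, by rw [← hY, ENNReal.ofReal_toReal (hg_fin Y)]⟩

lemma rearrP_le_inv_mul_of_forall_setLIntegral_le {g : ℝ → ℝ≥0∞} (hg : Measurable g) {t : ℝ}
    (ht : 0 < t) {B : ℝ≥0∞}
    (hB : ∀ E, MeasurableSet E → mP E ≤ ENNReal.ofReal t → ∫⁻ x in E, g x ∂mP ≤ B) :
    rearrP g t ≤ (ENNReal.ofReal t)⁻¹ * B := by
  refine le_of_forall_lt_imp_le_of_dense fun l hl => ?_
  rcases eq_zero_or_pos l with rfl | hl0
  · exact zero_le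
  have hM : ENNReal.ofReal t < mP {x | l < g x} := lt_of_not_ge fun h => hl.not_ge (rearr_le hl0 h)
  obtain ⟨X, hX⟩ := exists_mP_inter_Ioc_eq ht.le hM
  have hE : MeasurableSet ({x | l < g x} ∩ Ioc 0 X) :=
    (measurableSet_lt measurable_const hg).inter measurableSet_Ioc
  rw [mul_comm, ← div_eq_mul_inv, ENNReal.le_div_iff_mul_le (.inl (ENNReal.ofReal_pos.2 ht).ne')
    (.inl ENNReal.ofReal_ne_top)]
  calc l * ENNReal.ofReal t = ∫⁻ _ in {x | l < g x} ∩ Ioc 0 X, l ∂mP := by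
        rw [setLIntegral_const, hX]
    _ ≤ ∫⁻ x in {x | l < g x} ∩ Ioc 0 X, g x ∂mP := setLIntegral_mono hg fun x hx => hx.1.le
    _ ≤ B := hB _ hE hX.le

end Averages

section KernelOperator

variable {K : ℝ → ℝ → ℝ≥0∞} {f : ℝ → ℝ≥0∞}

lemma setLIntegral_TK_le (hK : Measurable (uncurry K)) (hf : Measurable f) {E : Set ℝ}
    (hE : MeasurableSet E) {t : ℝ} (hEt : mP E ≤ ENNReal.ofReal t) :
    ∫⁻ x in E, TK K f x ∂mP ≤ ∫⁻ τ in Ioc 0 t, TK (iterRearr K) (rearrP f) τ := by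
  have hG := measurable_rearrP_uncurry hK
  have hL := measurable_iterRearr hK
  have hGs : ∀ s, Measurable fun x => rearrP (K x) s := fun s => hG.comp measurable_prodMk_right
  calc ∫⁻ x in E, TK K f x ∂mP
      ≤ ∫⁻ x in E, ∫⁻ s, rearrP (K x) s * rearrP f s ∂mP ∂mP :=
        lintegral_mono fun x =>
          lintegral_mul_le_lintegral_rearr_mul_rearr (hK.comp measurable_prodMk_left) hf
    _ = ∫⁻ s, (∫⁻ x in E, rearrP (K x) s ∂mP) * rearrP f s ∂mP := by
        rw [lintegral_lintegral_swap
          (hG.mul ((measurable_rearr mP f).comp measurable_snd)).aemeasurable]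
        exact lintegral_congr fun s => lintegral_mul_const _ (hGs s)
    _ ≤ ∫⁻ s, (∫⁻ τ in Ioc 0 t, iterRearr K τ s) * rearrP f s ∂mP := by
        refine lintegral_mono fun s => ?_
        gcongr ?_ * _
        exact setLIntegral_le_setLIntegral_Ioc_rearr (hGs s) hE hEt
    _ = ∫⁻ s, (∫⁻ τ in Ioc 0 t, iterRearr K τ s * rearrP f s) ∂mP :=
        lintegral_congr fun s => (lintegral_mul_const _ (hL.comp measurable_prodMk_right)).symm
    _ = ∫⁻ τ in Ioc 0 t, ∫⁻ s, iterRearr K τ s * rearrP f s ∂mP :=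
        lintegral_lintegral_swap
          ((hL.comp measurable_swap).mul ((measurable_rearr mP f).comp measurable_fst)).aemeasurable
    _ = ∫⁻ τ in Ioc 0 t, TK (iterRearr K) (rearrP f) τ := rfl

lemma rearrP_TK_le (hK : Measurable (uncurry K)) (hf : Measurable f) {t : ℝ} (ht : 0 < t) :
    rearrP (TK K f) t ≤ (ENNReal.ofReal t)⁻¹ * ∫⁻ τ in Ioc 0 t, TK (iterRearr K) (rearrP f) τ :=
  rearrP_le_inv_mul_of_forall_setLIntegral_le (measurable_TK hK hf) ht
    fun _ hE hEt => setLIntegral_TK_le hK hf hE hEt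

lemma TK_antitone (hK : ∀ y, Antitone fun x => K x y) (f : ℝ → ℝ≥0∞) : Antitone (TK K f) :=
  fun _ _ h => lintegral_mono fun y => mul_le_mul_left (hK y h) _

end KernelOperator

lemma IsNFunctionWith.integrableOn_Ioc {φ Φ : ℝ → ℝ} (h : IsNFunctionWith φ Φ) (b : ℝ) :
    IntegrableOn φ (Ioc 0 b) := by
  obtain ⟨hmono, hpos, -, -⟩ := h
  refine IntegrableOn.of_bound measure_Ioc_lt_top
    (aemeasurable_restrict_of_monotoneOn measurableSet_Ioc
      (hmono.mono Ioc_subset_Ioi_self)).aestronglyMeasurable (φ b) ?_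
  filter_upwards [ae_restrict_mem measurableSet_Ioc] with y hy
  rw [Real.norm_of_nonneg (hpos y hy.1).le]
  exact hmono hy.1 (hy.1.trans_le hy.2) hy.2

lemma IsNFunction.monotoneOn {Φ : ℝ → ℝ} (h : IsNFunction Φ) : MonotoneOn Φ (Ici 0) := by
  obtain ⟨φ, hφ⟩ := h
  intro a _ b _ hab
  rw [hφ.2.2.2 a, hφ.2.2.2 b]
  refine setIntegral_mono_set (hφ.integrableOn_Ioc b) ?_ (Ioc_subset_Ioc_right hab).eventuallyLE
  filter_upwards [ae_restrict_mem measurableSet_Ioc] with y hy using (hφ.2.1 y hy.1).le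

lemma IsNFunction.monotone_appE {Φ : ℝ → ℝ} (h : IsNFunction Φ) : Monotone (appE Φ) := by
  intro x y hxy
  rcases eq_or_ne y ⊤ with rfl | hy
  · simp [appE]
  rw [appE, appE, if_neg (ne_top_of_le_ne_top hy hxy), if_neg hy]
  exact ENNReal.ofReal_le_ofReal (h.monotoneOn ENNReal.toReal_nonneg ENNReal.toReal_nonneg
    (ENNReal.toReal_mono hy hxy))

lemma gaugeW_mono {Φ : ℝ → ℝ} (hΦ : IsNFunction Φ) (u : ℝ → ℝ) {f g : ℝ → ℝ≥0∞}
    (h : ∀ x ∈ Ioi (0:ℝ), f x ≤ g x) : gaugeW Φ u f ≤ gaugeW Φ u g :=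
  sInf_le_sInf fun l ⟨hl, hint⟩ => ⟨hl, le_trans (setLIntegral_mono_ae' measurableSet_Ioi
    (ae_of_all _ fun x hx => by gcongr; exact hΦ.monotone_appE (by gcongr; exact h x hx))) hint⟩

theorem statement_11_general (K : ℝ → ℝ → ℝ≥0∞) (hK : Measurable (uncurry K))
    (Φ₁ Φ₂ : ℝ → ℝ) (h1 : IsNFunction Φ₁)
    (u₁ u₂ : ℝ → ℝ)
    (hHardy : ∃ C₀ > (0:ℝ), ∀ g : ℝ → ℝ≥0∞, Measurable g → AntitoneOn g (Ioi 0) →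
      gaugeW Φ₁ u₁ (fun t => (ENNReal.ofReal t)⁻¹ * ∫⁻ s in Ioc (0:ℝ) t, g s) ≤
        ENNReal.ofReal C₀ * gaugeW Φ₁ u₁ g)
    (hyp : ∃ C > (0:ℝ), ∀ f : ℝ → ℝ≥0∞, Measurable f →
      gaugeW Φ₁ u₁ (fun x => ∫⁻ s in Ioi (0:ℝ), iterRearr K x s * rearrP f s) ≤
        ENNReal.ofReal C * gaugeW Φ₂ u₂ (rearrP f)) :
    ∃ C' > (0:ℝ), ∀ f : ℝ → ℝ≥0∞, Measurable f →
      gaugeW Φ₁ u₁ (rearrP (TK K f)) ≤ ENNReal.ofReal C' * gaugeW Φ₂ u₂ (rearrP f) := by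
  obtain ⟨C₀, hC₀, hHardy⟩ := hHardy
  obtain ⟨C, hC, hyp⟩ := hyp
  refine ⟨C₀ * C, mul_pos hC₀ hC, fun f hf => ?_⟩
  have hTL : Antitone (TK (iterRearr K) (rearrP f)) :=
    TK_antitone (fun s => rearr_antitone mP fun x => rearrP (K x) s) _
  calc gaugeW Φ₁ u₁ (rearrP (TK K f))
      ≤ gaugeW Φ₁ u₁ fun t =>
          (ENNReal.ofReal t)⁻¹ * ∫⁻ τ in Ioc 0 t, TK (iterRearr K) (rearrP f) τ :=
        gaugeW_mono h1 u₁ fun t ht => rearrP_TK_le hK hf ht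
    _ ≤ ENNReal.ofReal C₀ * gaugeW Φ₁ u₁ (TK (iterRearr K) (rearrP f)) :=
        hHardy _ hTL.measurable (hTL.antitoneOn _)
    _ ≤ ENNReal.ofReal C₀ * (ENNReal.ofReal C * gaugeW Φ₂ u₂ (rearrP f)) := by
        gcongr; exact hyp f hf
    _ = ENNReal.ofReal (C₀ * C) * gaugeW Φ₂ u₂ (rearrP f) := by
        rw [ENNReal.ofReal_mul hC₀.le, mul_assoc]

/-- Theorem 8: if the Hardy averaging operator is bounded on
nonincreasing functions in `ρ_{Φ₁,u₁}` and `ρ_{Φ₁,u₁}(T_L f*) ≤ C ρ_{Φ₂,u₂}(f*)`,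
where `L` is the iterated rearrangement of `K`, then
`ρ_{Φ₁,u₁}((T_K f)*) ≤ C′ ρ_{Φ₂,u₂}(f*)`. -/
theorem statement_11 (K : ℝ → ℝ → ℝ≥0∞) (hK : Measurable (uncurry K))
    (Φ₁ Φ₂ : ℝ → ℝ) (h1 : IsNFunction Φ₁) (h2 : IsNFunction Φ₂)
    (hΔ1 : Delta2AtInfty Φ₁)
    (u₁ u₂ : ℝ → ℝ) (hu₁ : IsWeight u₁) (hu₂ : IsWeight u₂)
    (hu₁inf : ∫⁻ x in Ioi (0:ℝ), ENNReal.ofReal (u₁ x) = ∞)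
    (hHardy : ∃ C₀ > (0:ℝ), ∀ g : ℝ → ℝ≥0∞, Measurable g → AntitoneOn g (Ioi 0) →
      gaugeW Φ₁ u₁ (fun t => (ENNReal.ofReal t)⁻¹ * ∫⁻ s in Ioc (0:ℝ) t, g s) ≤
        ENNReal.ofReal C₀ * gaugeW Φ₁ u₁ g)
    (hyp : ∃ C > (0:ℝ), ∀ f : ℝ → ℝ≥0∞, Measurable f →
      gaugeW Φ₁ u₁ (fun x => ∫⁻ s in Ioi (0:ℝ), iterRearr K x s * rearrP f s) ≤
        ENNReal.ofReal C * gaugeW Φ₂ u₂ (rearrP f)) :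
    ∃ C' > (0:ℝ), ∀ f : ℝ → ℝ≥0∞, Measurable f →
      gaugeW Φ₁ u₁ (rearrP (TK K f)) ≤ ENNReal.ofReal C' * gaugeW Φ₂ u₂ (rearrP f) :=
  statement_11_general K hK Φ₁ Φ₂ h1 u₁ u₂ hHardy hyp

end
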